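/- Define polynomials B̃_T ∈ ℤ[x] recursively by B̃_∅ = 1 and B̃_T = x·B̃_R·Δ(B̃_L), where L and R are the left and right subtrees of T. Then for every binary tree T of size n and every k ≥ 0, the coefficient of x^k in B̃_T(x) equals the number of binary trees T' with T' ≥ T in the Tamari order whose rightmost branch (nodes reached from the root by following right children only) contains exactly k nodes. In particular, B̃_T(1) equals the number of binary trees T' with T' ≥ T. -/

import Mathlib

/-- Planar binary trees: empty, or a node with a left and a right subtree. -/
inductive BinTree : Type where
  | leaf : BinTree
  | node : BinTree → BinTree → BinTree
  deriving DecidableEq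

namespace BinTree

/-- Size: number of internal nodes. -/
def size : BinTree → ℕ
  | leaf => 0
  | node l r => l.size + r.size + 1

/-- `sub T o a b` : in the binary-search-tree labelling of `T` shifted by `o`
(its labels are `o+1, …, o+T.size`), the node labelled `a` lies in the subtree
rooted at the node labelled `b`, i.e. `a ⊴_T b`. -/
def sub : BinTree → ℕ → ℕ → ℕ → Prop
  | leaf, _, _, _ => False
  | node l r, o, a, b =>
      (b = o + l.size + 1 ∧ o + 1 ≤ a ∧ a ≤ o + l.size + r.size + 1) ∨
      l.sub o a b ∨ r.sub (o + l.size + 1) a b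

/-- One right rotation, applied at any position of the tree. -/
inductive Rot : BinTree → BinTree → Prop
  | base (A B C : BinTree) : Rot (node (node A B) C) (node A (node B C))
  | left {l l' : BinTree} (r : BinTree) : Rot l l' → Rot (node l r) (node l' r)
  | right (l : BinTree) {r r' : BinTree} : Rot r r' → Rot (node l r) (node l r')

end BinTree

/-- Tamari order: reflexive-transitive closure of right rotation. -/
def tamariLE : BinTree → BinTree → Prop := Relation.ReflTransGen BinTree.Rot

/-- `incRel T a c` : `a` is below `c` in the initial forest `inc T`. -/
def incRel (T : BinTree) (a c : ℕ) : Prop := a < c ∧ T.sub 0 a c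

/-- `decRel T c a` : `c` is below `a` in the final forest `dec T`. -/
def decRel (T : BinTree) (c a : ℕ) : Prop := a < c ∧ T.sub 0 c a

/-- `Δ(g) = (x·g(x) − g(1)) / (x − 1)`, an exact polynomial division. -/
noncomputable def polyDelta (g : Polynomial ℤ) : Polynomial ℤ :=
  Polynomial.divByMonic (Polynomial.X * g - Polynomial.C (g.eval 1))
    (Polynomial.X - Polynomial.C 1)

/-- The mirrored Tamari polynomial `B̃_T`, with `B̃_∅ = 1` and
`B̃_T = x·B̃_R·Δ(B̃_L)`. -/
noncomputable def BTt : BinTree → Polynomial ℤ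
  | BinTree.leaf => 1
  | BinTree.node l r => Polynomial.X * BTt r * polyDelta (BTt l)

/-- Number of nodes on the rightmost branch. -/
def rightDepth : BinTree → ℕ
  | BinTree.leaf => 0
  | BinTree.node _ r => rightDepth r + 1

/-!
Every tree above `node l r` in the Tamari order arises in exactly one way by choosing
`l' ≥ l`, `r' ≥ r` and a depth `d ≤ rightDepth l'`, and grafting `r'` at depth `d` of the
rightmost branch of `l'` (a sequence of `d` right rotations at the root pushes `r` down that
branch). The result has `d + 1 + rightDepth r'` nodes on its rightmost branch. Hence the
generating polynomial `∑_{T' ≥ T} x ^ rightDepth T'` of the upper set satisfies the recursion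
of `B̃_T`, because `Δ(x ^ m) = 1 + x + ⋯ + x ^ m`.
-/

open Polynomial Finset

namespace BinTree

theorem Rot.size_eq {T T' : BinTree} (h : Rot T T') : T'.size = T.size := by
  induction h with
  | base => simp only [size]; omega
  | left _ _ ih | right _ _ ih => simp only [size, ih]

/-- Replaces the subtree `s` at depth `d` of the rightmost branch of `l` by `node s r`
(for `d ≤ rightDepth l`; larger `d` are junk). -/
def graft (l r : BinTree) : ℕ → BinTree
  | 0 => node l r
  | d + 1 =>
    match l with
    | leaf => node leaf r
    | node a b => node a (graft b r d)
termination_by structural d => d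

@[simp] theorem graft_zero (l r : BinTree) : graft l r 0 = node l r := rfl

theorem graft_succ_node (a b r : BinTree) (d : ℕ) :
    graft (node a b) r (d + 1) = node a (graft b r d) := rfl

theorem size_graft (l r : BinTree) (d : ℕ) : (graft l r d).size = l.size + r.size + 1 := by
  induction d generalizing l with
  | zero => rfl
  | succ d ih =>
    cases l with
    | leaf => rfl
    | node a b => simp only [graft_succ_node, size, ih]; omega

theorem rightDepth_graft {l : BinTree} (r : BinTree) {d : ℕ} (hd : d ≤ rightDepth l) :
    rightDepth (graft l r d) = d + 1 + rightDepth r := by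
  induction d generalizing l with
  | zero => simp only [graft_zero, rightDepth]; omega
  | succ d ih =>
    cases l with
    | leaf => simp [rightDepth] at hd
    | node a b =>
      simp only [rightDepth] at hd
      simp only [graft_succ_node, rightDepth, ih (by omega : d ≤ rightDepth b)]
      omega

theorem graft_injective {l₁ r₁ l₂ r₂ : BinTree} {d₁ d₂ : ℕ} (h₁ : d₁ ≤ rightDepth l₁)
    (h₂ : d₂ ≤ rightDepth l₂) (hr : r₁.size = r₂.size) (h : graft l₁ r₁ d₁ = graft l₂ r₂ d₂) :
    l₁ = l₂ ∧ r₁ = r₂ ∧ d₁ = d₂ := by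
  induction d₁ generalizing l₁ l₂ d₂ with
  | zero =>
    cases d₂ with
    | zero => simp_all
    | succ d₂ =>
      cases l₂ with
      | leaf => simp [rightDepth] at h₂
      | node a b =>
        -- `r₁` would be `graft b r₂ d₂`, which is strictly larger than `r₂`
        rw [graft_zero, graft_succ_node, node.injEq] at h
        have := size_graft b r₂ d₂
        rw [← h.2] at this
        omega
  | succ d₁ ih =>
    cases l₁ with
    | leaf => simp [rightDepth] at h₁
    | node a₁ b₁ =>
      cases d₂ with
      | zero =>
        rw [graft_zero, graft_succ_node, node.injEq] at h
        have := size_graft b₁ r₁ d₁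
        rw [h.2] at this
        omega
      | succ d₂ =>
        cases l₂ with
        | leaf => simp [rightDepth] at h₂
        | node a₂ b₂ =>
          rw [graft_succ_node, graft_succ_node, node.injEq] at h
          simp only [rightDepth] at h₁ h₂
          obtain ⟨rfl, rfl, rfl⟩ := ih (by omega) (by omega) h.2
          simp [h.1]

end BinTree

open BinTree

theorem tamariLE_refl (T : BinTree) : tamariLE T T := Relation.ReflTransGen.refl

theorem tamariLE.trans {a b c : BinTree} (h : tamariLE a b) (h' : tamariLE b c) :
    tamariLE a c :=
  Relation.ReflTransGen.trans h h'

theorem tamariLE.size_eq {T T' : BinTree} (h : tamariLE T T') : T'.size = T.size := by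
  induction h with
  | refl => rfl
  | tail _ h ih => rw [h.size_eq, ih]

theorem tamariLE.node {l l' r r' : BinTree} (hl : tamariLE l l') (hr : tamariLE r r') :
    tamariLE (BinTree.node l r) (BinTree.node l' r') :=
  Relation.ReflTransGen.trans (hl.lift (BinTree.node · r) fun _ _ => Rot.left r)
    (hr.lift (BinTree.node l' ·) fun _ _ => Rot.right l')

theorem eq_leaf_of_tamariLE_leaf {T : BinTree} (h : tamariLE leaf T) : T = leaf := by
  induction h with
  | refl => rfl
  | tail _ h ih => subst ih; cases h

theorem tamariLE_graft {l : BinTree} (r : BinTree) {d : ℕ} (hd : d ≤ rightDepth l) :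
    tamariLE (node l r) (graft l r d) := by
  induction d generalizing l with
  | zero => rw [graft_zero]; exact tamariLE_refl _
  | succ d ih =>
    cases l with
    | leaf => simp [rightDepth] at hd
    | node a b =>
      simp only [rightDepth] at hd
      exact .head (Rot.base a b r) ((tamariLE_refl a).node (ih (by omega)))

theorem exists_graft_of_rot_graft {l r T : BinTree} {d : ℕ} (hd : d ≤ rightDepth l)
    (h : Rot (graft l r d) T) :
    ∃ l' r' d', d' ≤ rightDepth l' ∧ T = graft l' r' d' ∧ tamariLE l l' ∧ tamariLE r r' := by
  induction d generalizing l r T with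
  | zero =>
    rw [graft_zero] at h
    cases h with
    | base A B C => exact ⟨node A B, r, 1, Nat.le_add_left _ _, rfl, tamariLE_refl _, tamariLE_refl _⟩
    | left r h => exact ⟨_, r, 0, Nat.zero_le _, (graft_zero _ _).symm, .single h, tamariLE_refl _⟩
    | right l h => exact ⟨l, _, 0, Nat.zero_le _, (graft_zero _ _).symm, tamariLE_refl _, .single h⟩
  | succ d ih =>
    cases l with
    | leaf => simp [rightDepth] at hd
    | node a b =>
      simp only [rightDepth] at hd
      rw [graft_succ_node] at h
      cases h with
      | base A B C =>
        exact ⟨node A (node B b), r, d + 2, by simp only [rightDepth]; omega, rfl,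
          .single (Rot.base A B b), tamariLE_refl _⟩
      | left _ h =>
        exact ⟨node _ b, r, d + 1, by simpa only [rightDepth] using hd, rfl,
          .single (Rot.left b h), tamariLE_refl _⟩
      | right _ h =>
        obtain ⟨b', r', d', hd', rfl, hb, hr⟩ := ih (by omega) h
        exact ⟨node a b', r', d' + 1, by simp only [rightDepth]; omega, rfl,
          (tamariLE_refl a).node hb, hr⟩

theorem tamariLE_node_iff {l r T : BinTree} :
    tamariLE (node l r) T ↔
      ∃ l' r' d, d ≤ rightDepth l' ∧ T = graft l' r' d ∧ tamariLE l l' ∧ tamariLE r r' := by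
  refine ⟨fun h => ?_, ?_⟩
  · induction h with
    | refl => exact ⟨l, r, 0, Nat.zero_le _, (graft_zero l r).symm, tamariLE_refl _, tamariLE_refl _⟩
    | tail _ h ih =>
      obtain ⟨l₁, r₁, d₁, hd₁, rfl, hl₁, hr₁⟩ := ih
      obtain ⟨l₂, r₂, d₂, hd₂, rfl, hl₂, hr₂⟩ := exists_graft_of_rot_graft hd₁ h
      exact ⟨l₂, r₂, d₂, hd₂, rfl, hl₁.trans hl₂, hr₁.trans hr₂⟩
  · rintro ⟨l', r', d, hd, rfl, hl, hr⟩
    exact (hl.node hr).trans (tamariLE_graft r' hd)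

def tamariUpperSet : BinTree → Finset BinTree
  | leaf => {leaf}
  | node l r =>
      ((tamariUpperSet l ×ˢ tamariUpperSet r).sigma fun p => range (rightDepth p.1 + 1)).image
        fun x => graft x.1.1 x.1.2 x.2

theorem mem_tamariUpperSet {T T' : BinTree} : T' ∈ tamariUpperSet T ↔ tamariLE T T' := by
  induction T generalizing T' with
  | leaf => exact ⟨fun h => mem_singleton.mp h ▸ tamariLE_refl _,
      fun h => mem_singleton.mpr (eq_leaf_of_tamariLE_leaf h)⟩
  | node l r ihl ihr =>
    simp only [tamariUpperSet, mem_image, mem_sigma, mem_product, mem_range, Nat.lt_succ_iff,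
      ihl, ihr, tamariLE_node_iff, Sigma.exists, Prod.exists]
    constructor
    · rintro ⟨l', r', d, ⟨⟨hl, hr⟩, hd⟩, rfl⟩
      exact ⟨l', r', d, hd, rfl, hl, hr⟩
    · rintro ⟨l', r', d, hd, rfl, hl, hr⟩
      exact ⟨l', r', d, ⟨⟨hl, hr⟩, hd⟩, rfl⟩

theorem coe_tamariUpperSet (T : BinTree) : ↑(tamariUpperSet T) = {T' | tamariLE T T'} :=
  Set.ext fun _ => mem_tamariUpperSet

theorem sum_tamariUpperSet_node {M : Type*} [AddCommMonoid M] (l r : BinTree)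
    (f : BinTree → M) :
    ∑ T ∈ tamariUpperSet (node l r), f T =
      ∑ a ∈ tamariUpperSet l, ∑ b ∈ tamariUpperSet r, ∑ d ∈ range (rightDepth a + 1),
        f (graft a b d) := by
  rw [tamariUpperSet, sum_image, sum_sigma, sum_product]
  rintro ⟨⟨l₁, r₁⟩, d₁⟩ h₁ ⟨⟨l₂, r₂⟩, d₂⟩ h₂ h
  simp only [coe_sigma, Set.mem_sigma_iff, coe_product, Set.mem_prod, mem_coe,
    mem_tamariUpperSet, mem_range, Nat.lt_succ_iff] at h₁ h₂
  obtain ⟨rfl, rfl, rfl⟩ :=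
    graft_injective h₁.2 h₂.2 (h₁.1.2.size_eq.trans h₂.1.2.size_eq.symm) h
  rfl

theorem polyDelta_eq_of_mul_eq {g q : ℤ[X]} (h : (X - C 1) * q = X * g - C (g.eval 1)) :
    polyDelta g = q := by
  have hdiv := modByMonic_add_div (X * g - C (g.eval 1)) (X - C 1)
  rw [modByMonic_X_sub_C_eq_C_eval] at hdiv
  simp only [eval_sub, eval_mul, eval_X, eval_C, one_mul, sub_self, map_zero, zero_add] at hdiv
  exact mul_left_cancel₀ (X_sub_C_ne_zero 1) (hdiv.trans h.symm)

theorem polyDelta_sum_X_pow {ι : Type*} (s : Finset ι) (m : ι → ℕ) :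
    polyDelta (∑ i ∈ s, X ^ m i) = ∑ i ∈ s, ∑ d ∈ range (m i + 1), (X : ℤ[X]) ^ d := by
  apply polyDelta_eq_of_mul_eq
  rw [C_1, mul_sum, sum_congr rfl fun i _ => mul_geom_sum X (m i + 1), mul_sum]
  simp [eval_finsetSum, sum_sub_distrib, pow_succ']

theorem coeff_sum_X_pow {ι : Type*} (s : Finset ι) (m : ι → ℕ) (k : ℕ) :
    (∑ i ∈ s, (X : ℤ[X]) ^ m i).coeff k = #{i ∈ s | m i = k} := by
  simp only [finsetSum_coeff, coeff_X_pow, sum_boole, eq_comm]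

theorem BTt_eq_sum_tamariUpperSet (T : BinTree) :
    BTt T = ∑ T' ∈ tamariUpperSet T, X ^ rightDepth T' := by
  induction T with
  | leaf => simp [BTt, tamariUpperSet, rightDepth]
  | node l r ihl ihr =>
    rw [BTt, ihl, ihr, polyDelta_sum_X_pow, sum_tamariUpperSet_node, mul_sum]
    refine sum_congr rfl fun a _ => ?_
    rw [mul_assoc, sum_mul_sum, mul_sum]
    refine sum_congr rfl fun b _ => ?_
    rw [mul_sum]
    refine sum_congr rfl fun d hd => ?_
    have hd : d ≤ rightDepth a := Nat.lt_succ_iff.mp (mem_range.mp hd)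
    rw [rightDepth_graft b hd, pow_add, pow_add, pow_one]
    ring

theorem stmt12_general (T : BinTree) (k : ℕ) :
    (BTt T).coeff k =
      (({T' : BinTree | tamariLE T T' ∧ rightDepth T' = k}).ncard : ℤ) ∧
    (BTt T).eval 1 = (({T' : BinTree | tamariLE T T'}).ncard : ℤ) := by
  have hk : {T' | tamariLE T T' ∧ rightDepth T' = k} =
      ↑{T' ∈ tamariUpperSet T | rightDepth T' = k} := by
    ext T'
    simp [mem_tamariUpperSet]
  rw [BTt_eq_sum_tamariUpperSet, hk, ← coe_tamariUpperSet, Set.ncard_coe_finset,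
    Set.ncard_coe_finset, coeff_sum_X_pow]
  simp [eval_finsetSum]

/-- The coefficient of `x^k` in `B̃_T` counts the trees `T' ≥ T` whose
rightmost branch has exactly `k` nodes; `B̃_T(1)` counts all trees `T' ≥ T`. -/
theorem stmt12 (n : ℕ) (T : BinTree) (hT : T.size = n) (k : ℕ) :
    (BTt T).coeff k =
      (({T' : BinTree | tamariLE T T' ∧ rightDepth T' = k}).ncard : ℤ) ∧
    (BTt T).eval 1 = (({T' : BinTree | tamariLE T T'}).ncard : ℤ) :=
  stmt12_general T k
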